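/- arXiv:2103.15717 — 4 statements merged into one kernel-verified Lean document; each statement's English description precedes it below -/
import Mathlib

section
/- Let X be a locally compact, second countable Hausdorff topological space, let (\mu_n)_{n \in \mathbb{N}} be a sequence of signed Borel measures on X and \omega a signed Borel measure on X, all of whose total variations are finite on compact sets. Let Z \subseteq X be a closed subset with |\omega|(Z) = 0. Assume that (\mu_n) converges vaguely to \omega on the open set X \setminus Z, and that for every compact subset C \subseteq Z and every \varepsilon > 0 there exists an open set U \supseteq C with \limsup_{n \to \infty} |\mu_n|(U) \le \varepsilon. Then (\mu_n) converges vaguely to \omega on all of X. -/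
/-!
Fix a test function `f`. The part `C = tsupport f ∩ Z` of its support on `Z` is a compact
`|ω|`-null set, so by outer regularity and the hypothesis on `|μ n|` there is an open `W ⊇ C`
with `|ω|(W)` and, eventually, `|μ n|(W)` small. Cutting `f` off by a Urysohn function `χ` that
is `1` near `C` and `0` off `W` gives `g = f (1 - χ)`, supported away from `Z`, whose integrals
converge; and `f - g` vanishes off `W` and is bounded by `sup |f|`, so it contributes at most
`sup |f| · |ν|(W)` for `ν = μ n` and `ν = ω`.
-/

open MeasureTheory Filter Topology

/-- A sequence of signed Borel measures (given as differences `μp n - μm n` of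
positive measures) converges vaguely to the signed measure `ωp - ωm` on an open
set `U` if integrals of continuous functions compactly supported in `U` converge. -/
def VagueOn {X : Type*} [TopologicalSpace X] [MeasurableSpace X]
    (μp μm : ℕ → Measure X) (ωp ωm : Measure X) (U : Set X) : Prop :=
  ∀ f : X → ℝ, Continuous f → IsCompact (tsupport f) → tsupport f ⊆ U →
    Tendsto (fun n => (∫ x, f x ∂(μp n)) - ∫ x, f x ∂(μm n)) atTop
      (𝓝 ((∫ x, f x ∂ωp) - ∫ x, f x ∂ωm))

open Set ENNReal

instance MeasureTheory.IsFiniteMeasureOnCompacts.add {X : Type*} [TopologicalSpace X]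
    [MeasurableSpace X] (μ ν : Measure X) [IsFiniteMeasureOnCompacts μ]
    [IsFiniteMeasureOnCompacts ν] : IsFiniteMeasureOnCompacts (μ + ν) :=
  ⟨fun _ hK => by
    rw [Measure.add_apply]; exact ENNReal.add_lt_top.2 ⟨hK.measure_lt_top, hK.measure_lt_top⟩⟩

theorem tendsto_of_forall_pos_approx {α β : Type*} [PseudoMetricSpace β] {l : Filter α}
    {u : α → β} {a : β}
    (h : ∀ ε > 0, ∃ (v : α → β) (b : β),
      Tendsto v l (𝓝 b) ∧ (∀ᶠ n in l, dist (u n) (v n) ≤ ε) ∧ dist a b ≤ ε) :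
    Tendsto u l (𝓝 a) := by
  refine Metric.tendsto_nhds.2 fun ε hε => ?_
  obtain ⟨v, b, hvb, huv, hab⟩ := h (ε / 3) (by positivity)
  filter_upwards [huv, Metric.tendsto_nhds.1 hvb (ε / 3) (by positivity)] with n hun hvn
  calc dist (u n) a ≤ dist (u n) (v n) + dist (v n) b + dist a b := by
        rw [dist_comm a b]; exact dist_triangle4 _ _ _ _
    _ < ε := by linarith

theorem exists_continuous_eqOn_one_nhdsSet_eqOn_zero {X : Type*} [TopologicalSpace X]
    [LocallyCompactSpace X] [RegularSpace X] {C W : Set X} (hC : IsCompact C) (hW : IsOpen W)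
    (hCW : C ⊆ W) :
    ∃ (χ : C(X, ℝ)) (O : Set X), IsOpen O ∧ C ⊆ O ∧ EqOn χ 1 O ∧ EqOn χ 0 Wᶜ ∧
      ∀ x, χ x ∈ Icc (0 : ℝ) 1 := by
  obtain ⟨L, hL, hCL, hLW⟩ := exists_compact_between hC hW hCW
  obtain ⟨χ, hχL, hχW, -, hχ01⟩ := exists_continuous_one_zero_of_isCompact hL
    hW.isClosed_compl (disjoint_compl_right_iff_subset.2 hLW)
  exact ⟨χ, interior L, isOpen_interior, hCL, hχL.mono interior_subset, hχW, hχ01⟩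

theorem tsupport_mul_one_sub_subset {X R : Type*} [TopologicalSpace X] [Ring R]
    {f χ : X → R} {O : Set X} (hO : IsOpen O) (hχ : EqOn χ 1 O) :
    tsupport (fun x => f x * (1 - χ x)) ⊆ tsupport f \ O := by
  refine closure_minimal (fun x hx => ⟨subset_tsupport f (left_ne_zero_of_mul hx), fun hxO => ?_⟩)
    ((isClosed_tsupport f).sdiff hO)
  simp [hχ hxO] at hx

theorem exists_continuous_eqOn_compl_of_tsupport_inter_subset {X : Type*} [TopologicalSpace X]
    [LocallyCompactSpace X] [RegularSpace X] {f : X → ℝ} {Z W : Set X} (hf : Continuous f)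
    (hfc : HasCompactSupport f) (hZ : IsClosed Z) (hW : IsOpen W) (hZW : tsupport f ∩ Z ⊆ W) :
    ∃ g : X → ℝ, Continuous g ∧ HasCompactSupport g ∧ tsupport g ⊆ Zᶜ ∧ EqOn f g Wᶜ ∧
      ∀ x, |f x - g x| ≤ |f x| := by
  obtain ⟨χ, O, hO, hZO, hχO, hχW, hχ01⟩ :=
    exists_continuous_eqOn_one_nhdsSet_eqOn_zero (hfc.inter_right hZ) hW hZW
  refine ⟨fun x => f x * (1 - χ x), by fun_prop,
    HasCompactSupport.mul_right (f' := fun x => 1 - χ x) hfc, fun x hx hxZ => ?_,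
    fun x hx => by simp [hχW hx], fun x => ?_⟩
  · obtain ⟨hxf, hxO⟩ := tsupport_mul_one_sub_subset hO hχO hx
    exact hxO (hZO ⟨hxf, hxZ⟩)
  · calc |f x - f x * (1 - χ x)| = |f x| * |χ x| := by rw [← abs_mul]; ring_nf
      _ ≤ |f x| * 1 := by gcongr; exact abs_le.2 ⟨by linarith [(hχ01 x).1], (hχ01 x).2⟩
      _ = |f x| := mul_one _

section IntegralBounds

variable {X : Type*} [TopologicalSpace X] [MeasurableSpace X] [OpensMeasurableSpace X]
  {f g : X → ℝ} {s : Set X} {M : ℝ}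

theorem abs_integral_sub_integral_le_of_eqOn_compl {μ : Measure X} [IsFiniteMeasureOnCompacts μ]
    (hf : Continuous f) (hfc : HasCompactSupport f) (hg : Continuous g) (hgc : HasCompactSupport g)
    (hfg : EqOn f g sᶜ) (hM : ∀ x ∈ s, |f x - g x| ≤ M) (hs : μ s ≠ ∞) :
    |∫ x, f x ∂μ - ∫ x, g x ∂μ| ≤ M * μ.real s := by
  rw [← integral_sub (hf.integrable_of_hasCompactSupport hfc)
    (hg.integrable_of_hasCompactSupport hgc),
    ← setIntegral_eq_integral_of_forall_compl_eq_zero fun x hx => sub_eq_zero.2 (hfg hx)]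
  exact norm_setIntegral_le_of_norm_le_const (f := fun x => f x - g x) hs.lt_top hM

theorem dist_integral_sub_integral_le_of_eqOn_compl {μ ν : Measure X}
    [IsFiniteMeasureOnCompacts μ] [IsFiniteMeasureOnCompacts ν]
    (hf : Continuous f) (hfc : HasCompactSupport f) (hg : Continuous g) (hgc : HasCompactSupport g)
    (hfg : EqOn f g sᶜ) (hM : ∀ x ∈ s, |f x - g x| ≤ M) (hs : (μ + ν) s ≠ ∞) :
    dist (∫ x, f x ∂μ - ∫ x, f x ∂ν) (∫ x, g x ∂μ - ∫ x, g x ∂ν) ≤ M * (μ + ν).real s := by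
  rw [Measure.add_apply, ENNReal.add_ne_top] at hs
  have hμ := abs_integral_sub_integral_le_of_eqOn_compl hf hfc hg hgc hfg hM hs.1
  have hν := abs_integral_sub_integral_le_of_eqOn_compl hf hfc hg hgc hfg hM hs.2
  rw [measureReal_add_apply hs.1 hs.2, Real.dist_eq, mul_add]
  calc _ = |(∫ x, f x ∂μ - ∫ x, g x ∂μ) - (∫ x, f x ∂ν - ∫ x, g x ∂ν)| := by ring_nf
    _ ≤ _ := (abs_sub _ _).trans (add_le_add hμ hν)

end IntegralBounds

/-- If a sequence of signed measures converges vaguely to `ω` outside of a closed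
`ω`-null set `Z`, and the total variations `|μ n|` are asymptotically uniformly small
on neighborhoods of compact subsets of `Z`, then vague convergence holds on all of `X`. -/
theorem vague_convergence_of_convergence_off_closed_null_set
    {X : Type*} [TopologicalSpace X] [LocallyCompactSpace X] [T2Space X]
    [SecondCountableTopology X] [MeasurableSpace X] [BorelSpace X]
    (μp μm : ℕ → Measure X) (ωp ωm : Measure X)
    (hμp : ∀ n, IsFiniteMeasureOnCompacts (μp n))
    (hμm : ∀ n, IsFiniteMeasureOnCompacts (μm n))
    (hωp : IsFiniteMeasureOnCompacts ωp) (hωm : IsFiniteMeasureOnCompacts ωm)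
    (Z : Set X) (hZclosed : IsClosed Z) (hZnull : (ωp + ωm) Z = 0)
    (hconv : VagueOn μp μm ωp ωm Zᶜ)
    (hsmall : ∀ C : Set X, C ⊆ Z → IsCompact C → ∀ ε : ℝ, 0 < ε →
      ∃ U : Set X, IsOpen U ∧ C ⊆ U ∧
        Filter.limsup (fun n => μp n U + μm n U) atTop ≤ ENNReal.ofReal ε) :
    VagueOn μp μm ωp ωm Set.univ := by
  intro f hf hfc _
  obtain ⟨M, hM0, hM⟩ : ∃ M, 0 ≤ M ∧ ∀ x, |f x| ≤ M :=
    let ⟨M, hM⟩ := HasCompactSupport.exists_bound_of_continuous hfc hf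
    ⟨max M 0, le_max_right M 0, fun x => (hM x).trans (le_max_left M 0)⟩
  refine tendsto_of_forall_pos_approx fun ε hε => ?_
  obtain ⟨δ, hδ, hMδ⟩ : ∃ δ > 0, M * δ ≤ ε :=
    ⟨ε / (M + 1), by positivity, by rw [mul_div_assoc', div_le_iff₀ (by positivity)]; nlinarith⟩
  have hC : IsCompact (tsupport f ∩ Z) := hfc.inter_right hZclosed
  obtain ⟨U, hU, hCU, hμU⟩ := hsmall _ inter_subset_right hC (δ / 2) (by positivity)
  obtain ⟨V, hCV, hV, hωV⟩ := hC.exists_isOpen_lt_of_lt (μ := ωp + ωm) (ENNReal.ofReal δ)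
    (by rw [measure_mono_null inter_subset_right hZnull]; positivity)
  obtain ⟨g, hg, hgc, hgZ, hfg, hfgM⟩ := exists_continuous_eqOn_compl_of_tsupport_inter_subset
    hf hfc hZclosed (hU.inter hV) (subset_inter hCU hCV)
  have hclose : ∀ (ρ ρ' : Measure X) [IsFiniteMeasureOnCompacts ρ] [IsFiniteMeasureOnCompacts ρ'],
      (ρ + ρ') (U ∩ V) < ENNReal.ofReal δ →
      dist (∫ x, f x ∂ρ - ∫ x, f x ∂ρ') (∫ x, g x ∂ρ - ∫ x, g x ∂ρ') ≤ ε := fun ρ ρ' _ _ hρ =>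
    calc _ ≤ M * (ρ + ρ').real (U ∩ V) := dist_integral_sub_integral_le_of_eqOn_compl hf hfc
          hg hgc hfg (fun x _ => (hfgM x).trans (hM x)) hρ.ne_top
      _ ≤ M * δ := by gcongr; exact (ENNReal.toReal_lt_of_lt_ofReal hρ).le
      _ ≤ ε := hMδ
  refine ⟨_, _, hconv g hg hgc hgZ, ?_,
    hclose ωp ωm ((measure_mono inter_subset_right).trans_lt hωV)⟩
  filter_upwards [eventually_lt_of_limsup_lt
    (hμU.trans_lt ((ENNReal.ofReal_lt_ofReal_iff hδ).2 (half_lt_self hδ)))] with n hn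
  exact hclose (μp n) (μm n) ((measure_mono inter_subset_left).trans_lt hn)
end

section
/- Let r \ge 1 and k \ge 1 be integers. The set of subgroups of \mathbb{Z}^r of index k is finite, and its cardinality b_k^{(r)} is given by b_k^{(r)} = \sum \prod_{i=0}^{r-1} k_i^{\,i}, where the sum runs over all r-tuples (k_0, k_1, \dots, k_{r-1}) of positive integers with k_0 k_1 \cdots k_{r-1} = k. -/
open AddSubgroup

namespace CardSubgroupsAux

lemma int_eq_zmultiples_index (H : AddSubgroup ℤ) :
    H = AddSubgroup.zmultiples ((H.index : ℤ)) := by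
  obtain ⟨a, rfl⟩ := Int.subgroup_cyclic H
  rw [← AddSubgroup.zmultiples_eq_closure, Int.index_zmultiples]
  ext x
  simp [Int.mem_zmultiples_iff, Int.natAbs_dvd]

variable {G : Type*} [AddCommGroup G]

lemma subtype_zero {H : AddSubgroup G} (h : (0:G) ∈ H) : (⟨0, h⟩ : ↥H) = 0 := rfl

lemma phi_zero {a : ℕ} {H : AddSubgroup G} (φ : ↥H →+ ZMod a) (h : (0:G) ∈ H) :
    φ ⟨0, h⟩ = 0 := by rw [subtype_zero, map_zero]

lemma phi_add {a : ℕ} {H : AddSubgroup G} (φ : ↥H →+ ZMod a) {y y' : G}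
    (h1 : y ∈ H) (h2 : y' ∈ H) (h : y + y' ∈ H) :
    φ ⟨y + y', h⟩ = φ ⟨y, h1⟩ + φ ⟨y', h2⟩ := by
  rw [show (⟨y + y', h⟩ : ↥H) = ⟨y, h1⟩ + ⟨y', h2⟩ from rfl, map_add]

lemma phi_neg {a : ℕ} {H : AddSubgroup G} (φ : ↥H →+ ZMod a) {y : G}
    (h1 : y ∈ H) (h : -y ∈ H) : φ ⟨-y, h⟩ = -φ ⟨y, h1⟩ := by
  rw [show (⟨-y, h⟩ : ↥H) = -⟨y, h1⟩ from rfl, map_neg]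

noncomputable def aIdx (Λ : AddSubgroup (ℤ × G)) : ℕ := (Λ.comap (AddMonoidHom.inl ℤ G)).index

def sndPart (Λ : AddSubgroup (ℤ × G)) : AddSubgroup G := Λ.map (AddMonoidHom.snd ℤ G)

lemma inl_mem_iff_dvd {Λ : AddSubgroup (ℤ × G)} {x : ℤ} :
    ((x, (0 : G)) ∈ Λ) ↔ (aIdx Λ : ℤ) ∣ x := by
  have h : x ∈ Λ.comap (AddMonoidHom.inl ℤ G) ↔ ((x, (0:G)) ∈ Λ) := Iff.rfl
  rw [← h]
  conv_lhs => rw [int_eq_zmultiples_index (Λ.comap (AddMonoidHom.inl ℤ G))]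
  exact Int.mem_zmultiples_iff

lemma castdiff {Λ : AddSubgroup (ℤ × G)} {x x' : ℤ} {y : G}
    (h : (x, y) ∈ Λ) (h' : (x', y) ∈ Λ) : ((x : ZMod (aIdx Λ)) = (x' : ZMod (aIdx Λ))) := by
  have hm : ((x - x', (0 : G)) ∈ Λ) := by simpa using Λ.sub_mem h h'
  have h0 : ((x - x' : ℤ) : ZMod (aIdx Λ)) = 0 :=
    (ZMod.intCast_zmod_eq_zero_iff_dvd _ _).mpr (inl_mem_iff_dvd.mp hm)
  rw [Int.cast_sub, sub_eq_zero] at h0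
  exact h0

lemma mem_sndPart {Λ : AddSubgroup (ℤ × G)} {y : G} :
    y ∈ sndPart Λ ↔ ∃ x : ℤ, (x, y) ∈ Λ := by
  constructor
  · rintro h
    obtain ⟨⟨x, y'⟩, hp, rfl⟩ := AddSubgroup.mem_map.mp h
    exact ⟨x, hp⟩
  · rintro ⟨x, hx⟩
    exact AddSubgroup.mem_map.mpr ⟨(x, y), hx, rfl⟩

noncomputable def phiFun (Λ : AddSubgroup (ℤ × G)) (a : ℕ) : sndPart Λ → ZMod a :=
  fun y => (((mem_sndPart.mp y.2).choose : ℤ) : ZMod a)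

lemma phiFun_spec {a : ℕ} (Λ : AddSubgroup (ℤ × G)) (ha : aIdx Λ = a) {x : ℤ} {y : G}
    (h : (x, y) ∈ Λ) (hy : y ∈ sndPart Λ) :
    phiFun Λ a ⟨y, hy⟩ = (x : ZMod a) := by
  subst ha
  exact castdiff (mem_sndPart.mp hy).choose_spec h

noncomputable def phi (Λ : AddSubgroup (ℤ × G)) (a : ℕ) (ha : aIdx Λ = a)
    (H : AddSubgroup G) (hH : sndPart Λ = H) : ↥H →+ ZMod a :=
  AddMonoidHom.mk' (fun y => phiFun Λ a ⟨y.1, by rw [hH]; exact y.2⟩) (by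
    rintro ⟨y, hy⟩ ⟨y', hy'⟩
    subst hH
    obtain ⟨x, hx⟩ := mem_sndPart.mp hy
    obtain ⟨x', hx'⟩ := mem_sndPart.mp hy'
    have hxx : (x + x', y + y') ∈ Λ := Λ.add_mem hx hx'
    show phiFun Λ a ⟨y + y', _⟩ = phiFun Λ a ⟨y, _⟩ + phiFun Λ a ⟨y', _⟩
    rw [phiFun_spec Λ ha hx, phiFun_spec Λ ha hx', phiFun_spec Λ ha hxx, Int.cast_add])

lemma phi_spec (Λ : AddSubgroup (ℤ × G)) (a : ℕ) (ha : aIdx Λ = a)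
    (H : AddSubgroup G) (hH : sndPart Λ = H) {x : ℤ} {y : G}
    (h : (x, y) ∈ Λ) (hy : y ∈ H) :
    phi Λ a ha H hH ⟨y, hy⟩ = (x : ZMod a) := by
  show phiFun Λ a ⟨y, _⟩ = (x : ZMod a)
  exact phiFun_spec Λ ha h _

def glue (a : ℕ) (H : AddSubgroup G) (φ : ↥H →+ ZMod a) : AddSubgroup (ℤ × G) where
  carrier := {p | ∃ h : p.2 ∈ H, (p.1 : ZMod a) = φ ⟨p.2, h⟩}
  zero_mem' := ⟨H.zero_mem, by
    simp only [Prod.fst_zero, Prod.snd_zero]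
    rw [phi_zero]; simp⟩
  add_mem' := by
    rintro ⟨x, y⟩ ⟨x', y'⟩ ⟨h, e⟩ ⟨h', e'⟩
    refine ⟨H.add_mem h h', ?_⟩
    simp only [Prod.fst_add, Prod.snd_add]
    rw [phi_add φ h h', Int.cast_add, e, e']
  neg_mem' := by
    rintro ⟨x, y⟩ ⟨h, e⟩
    refine ⟨H.neg_mem h, ?_⟩
    simp only [Prod.fst_neg, Prod.snd_neg]
    rw [phi_neg φ h, Int.cast_neg, e]

lemma mem_glue {a : ℕ} {H : AddSubgroup G} {φ : ↥H →+ ZMod a} {p : ℤ × G} :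
    p ∈ glue a H φ ↔ ∃ h : p.2 ∈ H, (p.1 : ZMod a) = φ ⟨p.2, h⟩ := Iff.rfl

lemma sndPart_glue (a : ℕ) (H : AddSubgroup G) (φ : ↥H →+ ZMod a) :
    sndPart (glue a H φ) = H := by
  ext y
  rw [mem_sndPart]
  constructor
  · rintro ⟨x, h, -⟩; exact h
  · intro hy
    obtain ⟨x, hx⟩ := ZMod.intCast_surjective (φ ⟨y, hy⟩)
    exact ⟨x, hy, hx⟩

lemma aIdx_glue (a : ℕ) (H : AddSubgroup G) (φ : ↥H →+ ZMod a) :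
    aIdx (glue a H φ) = a := by
  have h : (glue a H φ).comap (AddMonoidHom.inl ℤ G) = AddSubgroup.zmultiples (a : ℤ) := by
    ext x
    show (∃ h : (0:G) ∈ H, ((x:ℤ) : ZMod a) = φ ⟨0, h⟩) ↔ _
    rw [Int.mem_zmultiples_iff]
    constructor
    · rintro ⟨h, e⟩
      rw [phi_zero φ h] at e
      exact (ZMod.intCast_zmod_eq_zero_iff_dvd _ _).mp e
    · intro hd
      exact ⟨H.zero_mem, by rw [phi_zero, (ZMod.intCast_zmod_eq_zero_iff_dvd _ _).mpr hd]⟩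
  rw [aIdx, h, Int.index_zmultiples, Int.natAbs_natCast]

lemma index_glue (a : ℕ) (H : AddSubgroup G) (φ : ↥H →+ ZMod a) :
    (glue a H φ).index = a * H.index := by
  set K := H.comap (AddMonoidHom.snd ℤ G) with hKdef
  have hle : glue a H φ ≤ K := by rintro p ⟨h, -⟩; exact h
  have hK : K.index = H.index :=
    AddSubgroup.index_comap_of_surjective _ (fun y => ⟨(0, y), rfl⟩)
  let ψ : ↥K →+ ZMod a := AddMonoidHom.mk'
    (fun p => (p.1.1 : ZMod a) - φ ⟨p.1.2, p.2⟩) (by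
      rintro ⟨⟨x, y⟩, h⟩ ⟨⟨x', y'⟩, h'⟩
      simp only [AddSubgroup.coe_add, Prod.fst_add, Prod.snd_add]
      rw [phi_add φ (show y ∈ H from h) (show y' ∈ H from h'), Int.cast_add]
      ring)
  have hsurj : Function.Surjective ψ := by
    intro z
    obtain ⟨x, hx⟩ := ZMod.intCast_surjective z
    refine ⟨⟨(x, 0), H.zero_mem⟩, ?_⟩
    show (x : ZMod a) - φ ⟨0, H.zero_mem⟩ = z
    rw [phi_zero, sub_zero, hx]
  have hker : ψ.ker = (glue a H φ).addSubgroupOf K := by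
    ext p
    rw [AddMonoidHom.mem_ker, AddSubgroup.mem_addSubgroupOf, mem_glue]
    show (p.1.1 : ZMod a) - φ ⟨p.1.2, p.2⟩ = 0 ↔ _
    rw [sub_eq_zero]
    exact ⟨fun h => ⟨p.2, h⟩, fun ⟨h, e⟩ => e⟩
  have hrel := AddSubgroup.relIndex_mul_index hle
  rw [hK] at hrel
  rw [← hrel]
  congr 1
  rw [AddSubgroup.relIndex, ← hker, AddSubgroup.index_ker,
    AddMonoidHom.range_eq_top_of_surjective ψ hsurj]
  rw [Nat.card_congr AddSubgroup.topEquiv.toEquiv, Nat.card_zmod]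

lemma glue_phi (Λ : AddSubgroup (ℤ × G)) (a : ℕ) (ha : aIdx Λ = a)
    (H : AddSubgroup G) (hH : sndPart Λ = H) :
    glue a H (phi Λ a ha H hH) = Λ := by
  subst ha; subst hH
  ext ⟨x, y⟩
  rw [mem_glue]
  constructor
  · rintro ⟨h, e⟩
    obtain ⟨x', hx'⟩ := mem_sndPart.mp h
    rw [phi_spec Λ _ rfl _ rfl hx' h] at e
    have hd : (aIdx Λ : ℤ) ∣ x - x' := by
      rwa [← sub_eq_zero, ← Int.cast_sub, ZMod.intCast_zmod_eq_zero_iff_dvd] at e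
    have h2 : ((x - x', (0:G)) ∈ Λ) := inl_mem_iff_dvd.mpr hd
    have h3 := Λ.add_mem h2 hx'
    simpa using h3
  · intro hxy
    have h : y ∈ sndPart Λ := mem_sndPart.mpr ⟨x, hxy⟩
    exact ⟨h, (phi_spec Λ _ rfl _ rfl hxy h).symm⟩

lemma phi_glue (a : ℕ) (H : AddSubgroup G) (φ : ↥H →+ ZMod a)
    (ha : aIdx (glue a H φ) = a) (hH : sndPart (glue a H φ) = H) :
    phi (glue a H φ) a ha H hH = φ := by
  ext y
  obtain ⟨y, hy⟩ := y
  obtain ⟨x, hx⟩ := ZMod.intCast_surjective (φ ⟨y, hy⟩)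
  have hmem : (x, y) ∈ glue a H φ := ⟨hy, hx⟩
  rw [phi_spec _ _ ha _ hH hmem hy, hx]

attribute [irreducible] glue phi aIdx sndPart

/-! ### The decomposition equivalence -/

def Dtype (n k : ℕ) : Type :=
  Σ p : {p : ℕ × ℕ // p ∈ k.divisorsAntidiagonal},
    Σ H : {H : AddSubgroup (Fin n → ℤ) // H.index = p.1.2}, (↥H.1 →+ ZMod p.1.1)

noncomputable def toD (n k : ℕ) (hk : k ≠ 0) :
    {Λ : AddSubgroup (ℤ × (Fin n → ℤ)) // Λ.index = k} → Dtype n k :=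
  fun Λ => ⟨⟨(aIdx Λ.1, (sndPart Λ.1).index), by
      rw [Nat.mem_divisorsAntidiagonal]
      refine ⟨?_, hk⟩
      calc aIdx Λ.1 * (sndPart Λ.1).index
          = (glue (aIdx Λ.1) (sndPart Λ.1) (phi Λ.1 _ rfl _ rfl)).index :=
            (index_glue _ _ _).symm
        _ = Λ.1.index := by rw [glue_phi]
        _ = k := Λ.2⟩,
    ⟨⟨sndPart Λ.1, rfl⟩, phi Λ.1 _ rfl _ rfl⟩⟩

noncomputable def ofD (n k : ℕ) :
    Dtype n k → {Λ : AddSubgroup (ℤ × (Fin n → ℤ)) // Λ.index = k} :=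
  fun x => ⟨glue x.1.1.1 x.2.1.1 x.2.2, by
    rw [index_glue, x.2.1.2]
    exact (Nat.mem_divisorsAntidiagonal.mp x.1.2).1⟩

lemma toD_eq (n k : ℕ) (hk : k ≠ 0) (Λ : {Λ : AddSubgroup (ℤ × (Fin n → ℤ)) // Λ.index = k})
    (a m : ℕ) (H : AddSubgroup (Fin n → ℤ)) (hH : H.index = m)
    (hp : ((a, m) : ℕ × ℕ) ∈ k.divisorsAntidiagonal)
    (h1 : aIdx Λ.1 = a) (h2 : sndPart Λ.1 = H) (φ : ↥H →+ ZMod a)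
    (hφ : phi Λ.1 a h1 H h2 = φ) :
    toD n k hk Λ = ⟨⟨(a, m), hp⟩, ⟨⟨H, hH⟩, φ⟩⟩ := by
  subst hφ; subst hH; subst h1; subst h2
  rfl

lemma ofD_toD (n k : ℕ) (hk : k ≠ 0) (Λ : {Λ : AddSubgroup (ℤ × (Fin n → ℤ)) // Λ.index = k}) :
    ofD n k (toD n k hk Λ) = Λ := by
  obtain ⟨Λ, hΛ⟩ := Λ
  exact Subtype.ext (glue_phi Λ (aIdx Λ) rfl (sndPart Λ) rfl)

lemma toD_ofD (n k : ℕ) (hk : k ≠ 0) (x : Dtype n k) :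
    toD n k hk (ofD n k x) = x := by
  obtain ⟨⟨⟨a, m⟩, hp⟩, ⟨⟨H, hH⟩, φ⟩⟩ := x
  exact toD_eq n k hk _ a m H hH hp (aIdx_glue a H φ) (sndPart_glue a H φ) φ
    (phi_glue a H φ _ _)

noncomputable def equivD (n k : ℕ) (hk : k ≠ 0) :
    {Λ : AddSubgroup (ℤ × (Fin n → ℤ)) // Λ.index = k} ≃ Dtype n k :=
  ⟨toD n k hk, ofD n k, ofD_toD n k hk, toD_ofD n k hk⟩

/-! ### Counting homomorphisms -/

lemma hom_equiv (n : ℕ) (H : AddSubgroup (Fin n → ℤ)) (hH : H.index ≠ 0) (a : ℕ) :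
    Nonempty ((↥H →+ ZMod a) ≃ (Fin n → ZMod a)) := by
  obtain ⟨e⟩ := Int.addSubgroup_index_ne_zero_iff.mp hH
  refine ⟨Equiv.trans ⟨fun f => f.comp e.symm.toAddMonoidHom,
    fun g => g.comp e.toAddMonoidHom, fun f => ?_, fun g => ?_⟩ ?_⟩
  · ext x; simp
  · ext x; simp
  · exact (addMonoidHomLequivInt (A := (Fin n → ℤ)) (B := ZMod a) ℤ).toEquiv.trans
      ((Pi.basisFun ℤ (Fin n)).constr (M' := ZMod a) ℤ).toEquiv.symm

lemma card_hom (n : ℕ) (H : AddSubgroup (Fin n → ℤ)) (hH : H.index ≠ 0) (a : ℕ) :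
    Nat.card (↥H →+ ZMod a) = a ^ n := by
  obtain ⟨e⟩ := hom_equiv n H hH a
  rw [Nat.card_congr e, Nat.card_pi]
  simp [Nat.card_zmod]

lemma finite_hom (n : ℕ) (H : AddSubgroup (Fin n → ℤ)) (hH : H.index ≠ 0) (a : ℕ) (ha : a ≠ 0) :
    Finite (↥H →+ ZMod a) := by
  obtain ⟨e⟩ := hom_equiv n H hH a
  haveI : NeZero a := ⟨ha⟩
  exact Finite.of_equiv _ e.symm

/-! ### The arithmetic function -/

def S (r k : ℕ) : Finset (Fin r → ℕ) :=
  (Fintype.piFinset fun _ => k.divisors).filter (fun c => ∏ i, c i = k)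

def F (r k : ℕ) : ℕ := ∑ c ∈ S r k, ∏ i, c i ^ (i : ℕ)

lemma mem_S {r k : ℕ} (hk : k ≠ 0) {c : Fin r → ℕ} :
    c ∈ S r k ↔ (∀ i, 0 < c i) ∧ ∏ i, c i = k := by
  rw [S, Finset.mem_filter, Fintype.mem_piFinset]
  constructor
  · rintro ⟨h1, h2⟩
    exact ⟨fun i => Nat.pos_of_mem_divisors (h1 i), h2⟩
  · rintro ⟨h1, h2⟩
    refine ⟨fun i => Nat.mem_divisors.mpr ⟨?_, hk⟩, h2⟩
    rw [← h2]
    exact Finset.dvd_prod_of_mem _ (Finset.mem_univ i)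

lemma F_succ (n k : ℕ) (hk : k ≠ 0) :
    F (n + 1) k = ∑ p ∈ k.divisorsAntidiagonal, F n p.2 * p.1 ^ n := by
  have h2 : ∑ p ∈ k.divisorsAntidiagonal, F n p.2 * p.1 ^ n
      = ∑ x ∈ k.divisorsAntidiagonal.sigma (fun p => S n p.2),
          (∏ i, x.2 i ^ (i : ℕ)) * x.1.1 ^ n := by
    rw [Finset.sum_sigma]
    refine Finset.sum_congr rfl fun p hp => ?_
    rw [F, Finset.sum_mul]
  rw [h2, F]
  refine (Finset.sum_nbij' (fun x => Fin.snoc x.2 x.1.1)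
    (fun c => ⟨(c (Fin.last n), ∏ i : Fin n, c (Fin.castSucc i)), Fin.init c⟩)
    ?_ ?_ ?_ ?_ ?_).symm
  · -- maps into S (n+1) k
    rintro ⟨⟨a, m⟩, d⟩ hx
    rw [Finset.mem_sigma] at hx
    obtain ⟨hp, hd⟩ := hx
    rw [Nat.mem_divisorsAntidiagonal] at hp
    have hm : m ≠ 0 := by rintro rfl; exact hk (by simpa using hp.1.symm)
    have ha : a ≠ 0 := by rintro rfl; exact hk (by simpa using hp.1.symm)
    obtain ⟨hdpos, hdprod⟩ := (mem_S hm).mp hd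
    rw [mem_S hk]
    constructor
    · intro i
      refine Fin.lastCases ?_ (fun j => ?_) i
      · simpa using Nat.pos_of_ne_zero ha
      · simpa using hdpos j
    · rw [Fin.prod_univ_castSucc]
      simp only [Fin.snoc_castSucc, Fin.snoc_last]
      rw [hdprod, mul_comm]
      exact hp.1
  · -- reverse maps into sigma
    intro c hc
    obtain ⟨hpos, hprod⟩ := (mem_S hk).mp hc
    rw [Finset.mem_sigma]
    have hmne : (∏ i : Fin n, c (Fin.castSucc i)) ≠ 0 :=
      Finset.prod_ne_zero_iff.mpr fun i _ => (hpos _).ne'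
    constructor
    · rw [Nat.mem_divisorsAntidiagonal]
      refine ⟨?_, hk⟩
      rw [← hprod, Fin.prod_univ_castSucc, mul_comm]
    · rw [mem_S hmne]
      exact ⟨fun i => hpos _, rfl⟩
  · -- left inverse
    rintro ⟨⟨a, m⟩, d⟩ hx
    rw [Finset.mem_sigma] at hx
    obtain ⟨hp, hd⟩ := hx
    rw [Nat.mem_divisorsAntidiagonal] at hp
    have hm : m ≠ 0 := by rintro rfl; exact hk (by simpa using hp.1.symm)
    obtain ⟨-, hdprod⟩ := (mem_S hm).mp hd
    refine Sigma.ext ?_ (heq_of_eq ?_)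
    · refine Prod.ext ?_ ?_ <;> simp [hdprod]
    · simp [Fin.init_snoc]
  · -- right inverse
    intro c hc
    exact Fin.snoc_init_self c
  · -- summand equality
    rintro ⟨⟨a, m⟩, d⟩ hx
    rw [Fin.prod_univ_castSucc]
    simp [Fin.snoc_castSucc, Fin.snoc_last, Fin.coe_castSucc, Fin.val_last]

/-! ### Nat.card of sigma types -/

lemma nat_card_sigma {ι : Type*} [Fintype ι] (f : ι → Type*) [hf : ∀ i, Finite (f i)] :
    Nat.card (Σ i, f i) = ∑ i, Nat.card (f i) := by
  haveI : ∀ i, Fintype (f i) := fun i => Fintype.ofFinite _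
  rw [Nat.card_eq_fintype_card, Fintype.card_sigma]
  exact Finset.sum_congr rfl fun i _ => (Nat.card_eq_fintype_card).symm

/-! ### Transport along additive equivalences -/

def piSuccAddEquiv (n : ℕ) : (Fin (n + 1) → ℤ) ≃+ ℤ × (Fin n → ℤ) where
  toFun f := (f 0, Fin.tail f)
  invFun p := Fin.cons p.1 p.2
  left_inv f := Fin.cons_self_tail f
  right_inv p := by
    refine Prod.ext ?_ ?_
    · simp
    · simp [Fin.tail_cons]
  map_add' f g := rfl

def subEquiv {A B : Type*} [AddGroup A] [AddGroup B] (e : A ≃+ B) (k : ℕ) :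
    {Λ : AddSubgroup B // Λ.index = k} ≃ {Λ : AddSubgroup A // Λ.index = k} where
  toFun Λ := ⟨Λ.1.comap e.toAddMonoidHom, by
    rw [AddSubgroup.index_comap_of_surjective]
    exacts [Λ.2, e.surjective]⟩
  invFun Λ := ⟨Λ.1.comap e.symm.toAddMonoidHom, by
    rw [AddSubgroup.index_comap_of_surjective]
    exacts [Λ.2, e.symm.surjective]⟩
  left_inv Λ := Subtype.ext (by ext x; simp [AddSubgroup.mem_comap])
  right_inv Λ := Subtype.ext (by ext x; simp [AddSubgroup.mem_comap])

/-! ### Base case -/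

lemma index_eq_one_of_zero (Λ : AddSubgroup (Fin 0 → ℤ)) : Λ = ⊤ := by
  ext x
  rw [Subsingleton.elim x 0]
  simpa using Λ.zero_mem

lemma F_zero (k : ℕ) : F 0 k = if k = 1 then 1 else 0 := by
  by_cases h1 : k = 1
  · subst h1
    have hS : S 0 1 = {default} := by
      ext c
      rw [mem_S one_ne_zero, Finset.mem_singleton]
      constructor
      · intro _; exact Subsingleton.elim _ _
      · intro _; exact ⟨fun i => i.elim0, by simp⟩
    rw [if_pos rfl, F, hS]
    simp
  · rw [if_neg h1, F]
    have hS : S 0 k = ∅ := by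
      ext c
      simp only [Finset.notMem_empty, iff_false]
      intro hc
      rw [S, Finset.mem_filter] at hc
      exact h1 (by simpa using hc.2.symm)
    rw [hS]
    simp

/-! ### Main induction -/

lemma main (n k : ℕ) (hk : k ≠ 0) :
    {Λ : AddSubgroup (Fin n → ℤ) | Λ.index = k}.Finite ∧
    Nat.card {Λ : AddSubgroup (Fin n → ℤ) // Λ.index = k} = F n k := by
  induction n generalizing k with
  | zero =>
    have hall : ∀ Λ : AddSubgroup (Fin 0 → ℤ), Λ.index = 1 := fun Λ => by
      rw [index_eq_one_of_zero Λ, AddSubgroup.index_top]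
    by_cases h1 : k = 1
    · subst h1
      constructor
      · exact Set.Finite.subset (Set.finite_singleton ⊤)
          (fun Λ _ => index_eq_one_of_zero Λ)
      · haveI : Unique {Λ : AddSubgroup (Fin 0 → ℤ) // Λ.index = 1} :=
          { default := ⟨⊤, AddSubgroup.index_top⟩,
            uniq := fun a => Subtype.ext (index_eq_one_of_zero a.1) }
        rw [Nat.card_unique, F_zero, if_pos rfl]
    · constructor
      · have : {Λ : AddSubgroup (Fin 0 → ℤ) | Λ.index = k} = ∅ := by
          ext Λ
          simp only [Set.mem_setOf_eq, Set.mem_empty_iff_false, iff_false]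
          intro h; exact h1 ((hall Λ).symm.trans h).symm
        rw [this]; exact Set.finite_empty
      · haveI : IsEmpty {Λ : AddSubgroup (Fin 0 → ℤ) // Λ.index = k} :=
          ⟨fun a => h1 ((hall a.1).symm.trans a.2).symm⟩
        rw [Nat.card_of_isEmpty, F_zero, if_neg h1]
  | succ n ih =>
    have EQ : {Λ : AddSubgroup (Fin (n + 1) → ℤ) // Λ.index = k} ≃ Dtype n k :=
      (subEquiv (piSuccAddEquiv n) k).symm.trans (equivD n k hk)
    haveI hfin : ∀ p : {p : ℕ × ℕ // p ∈ k.divisorsAntidiagonal},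
        Finite (Σ H : {H : AddSubgroup (Fin n → ℤ) // H.index = p.1.2},
          (↥H.1 →+ ZMod p.1.1)) := by
      rintro ⟨⟨a, m⟩, hp⟩
      rw [Nat.mem_divisorsAntidiagonal] at hp
      have ha : a ≠ 0 := left_ne_zero_of_mul (hp.1.trans_ne hp.2)
      have hm : m ≠ 0 := right_ne_zero_of_mul (hp.1.trans_ne hp.2)
      haveI := (ih m hm).1.to_subtype
      haveI : Finite {H : AddSubgroup (Fin n → ℤ) // H.index = m} :=
        Finite.of_equiv ↥{H : AddSubgroup (Fin n → ℤ) | H.index = m}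
          (Equiv.subtypeEquivRight fun H => Iff.rfl)
      haveI : ∀ H : {H : AddSubgroup (Fin n → ℤ) // H.index = m},
          Finite (↥H.1 →+ ZMod a) := fun H => finite_hom n H.1 (H.2.trans_ne hm) a ha
      infer_instance
    haveI hDfin : Finite (Dtype n k) := by unfold Dtype; infer_instance
    constructor
    · haveI : Finite {Λ : AddSubgroup (Fin (n + 1) → ℤ) // Λ.index = k} :=
        Finite.of_equiv _ EQ.symm
      haveI : Finite ↥{Λ : AddSubgroup (Fin (n + 1) → ℤ) | Λ.index = k} :=
        Finite.of_equiv {Λ : AddSubgroup (Fin (n + 1) → ℤ) // Λ.index = k}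
          (Equiv.subtypeEquivRight fun H => Iff.rfl)
      exact Set.toFinite _
    · rw [Nat.card_congr EQ]
      have hcard : ∀ p : {p : ℕ × ℕ // p ∈ k.divisorsAntidiagonal},
          Nat.card (Σ H : {H : AddSubgroup (Fin n → ℤ) // H.index = p.1.2},
            (↥H.1 →+ ZMod p.1.1)) = F n p.1.2 * p.1.1 ^ n := by
        rintro ⟨⟨a, m⟩, hp⟩
        rw [Nat.mem_divisorsAntidiagonal] at hp
        have ha : a ≠ 0 := left_ne_zero_of_mul (hp.1.trans_ne hp.2)
        have hm : m ≠ 0 := right_ne_zero_of_mul (hp.1.trans_ne hp.2)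
        haveI := (ih m hm).1.to_subtype
        haveI : Finite {H : AddSubgroup (Fin n → ℤ) // H.index = m} :=
          Finite.of_equiv ↥{H : AddSubgroup (Fin n → ℤ) | H.index = m}
            (Equiv.subtypeEquivRight fun H => Iff.rfl)
        haveI : Fintype {H : AddSubgroup (Fin n → ℤ) // H.index = m} := Fintype.ofFinite _
        haveI : ∀ H : {H : AddSubgroup (Fin n → ℤ) // H.index = m},
            Finite (↥H.1 →+ ZMod a) := fun H => finite_hom n H.1 (H.2.trans_ne hm) a ha
        rw [nat_card_sigma]
        have : ∀ H : {H : AddSubgroup (Fin n → ℤ) // H.index = m},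
            Nat.card (↥H.1 →+ ZMod a) = a ^ n :=
          fun H => card_hom n H.1 (H.2.trans_ne hm) a
        rw [Finset.sum_congr rfl fun H _ => this H, Finset.sum_const, Finset.card_univ,
          smul_eq_mul, ← Nat.card_eq_fintype_card, (ih m hm).2]
      rw [show Nat.card (Dtype n k)
          = Nat.card (Σ p : {p : ℕ × ℕ // p ∈ k.divisorsAntidiagonal},
            Σ H : {H : AddSubgroup (Fin n → ℤ) // H.index = p.1.2},
              (↥H.1 →+ ZMod p.1.1)) from rfl]
      rw [nat_card_sigma, Finset.sum_congr rfl fun p _ => hcard p, F_succ n k hk]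
      rw [← Finset.sum_coe_sort k.divisorsAntidiagonal (fun p => F n p.2 * p.1 ^ n)]

end CardSubgroupsAux

/-- The number of subgroups of `ℤ^r` of index `k` is finite and equals
`∑ k₀^0 k₁^1 ⋯ k_{r-1}^{r-1}`, the sum being over tuples of positive integers
with product `k`. -/
theorem card_subgroups_of_index
    (r k : ℕ) (hr : 1 ≤ r) (hk : 1 ≤ k) :
    {Λ : AddSubgroup (Fin r → ℤ) | Λ.index = k}.Finite ∧
    {Λ : AddSubgroup (Fin r → ℤ) | Λ.index = k}.ncard =
      ∑ᶠ c ∈ {c : Fin r → ℕ | (∀ i, 0 < c i) ∧ ∏ i, c i = k},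
        ∏ i : Fin r, (c i) ^ (i : ℕ) := by
  have hk' : k ≠ 0 := by omega
  obtain ⟨hfin, hcard⟩ := CardSubgroupsAux.main r k hk'
  refine ⟨hfin, ?_⟩
  have hset : {c : Fin r → ℕ | (∀ i, 0 < c i) ∧ ∏ i, c i = k}
      = ↑(CardSubgroupsAux.S r k) := by
    ext c
    rw [Finset.mem_coe, CardSubgroupsAux.mem_S hk']
    rfl
  calc {Λ : AddSubgroup (Fin r → ℤ) | Λ.index = k}.ncard
      = Nat.card ↥{Λ : AddSubgroup (Fin r → ℤ) | Λ.index = k} :=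
        (Nat.card_coe_set_eq _).symm
    _ = Nat.card {Λ : AddSubgroup (Fin r → ℤ) // Λ.index = k} :=
        Nat.card_congr (Equiv.subtypeEquivRight fun _ => Iff.rfl)
    _ = CardSubgroupsAux.F r k := hcard
    _ = ∑ᶠ c ∈ {c : Fin r → ℕ | (∀ i, 0 < c i) ∧ ∏ i, c i = k},
        ∏ i : Fin r, (c i) ^ (i : ℕ) := by
        rw [hset, finsum_mem_coe_finset]
        rfl
end

section
/- Let \beta > 0 be a real number and let (b_k)_{k \ge 1} be a sequence of nonnegative real numbers with b_1 = 1 such that the series \alpha := \sum_{k \ge 1} b_k\, k^{-2\beta} converges and \alpha < 2. Let (s'_n)_{n \ge 1} be a sequence of nonnegative real numbers, and for each n \ge 1 define s_n := \sum_{k=1}^{\lfloor \sqrt{n} \rfloor} n^{-\beta}\, \lfloor n/k^2 \rfloor^{\beta}\, b_k\, s'_{\lfloor n/k^2 \rfloor}. If s_n \to 1 as n \to \infty, then s'_n \to 1/\alpha as n \to \infty. -/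
open Filter Topology

/-!
Splitting off the term `k = 1` writes `s n = s' n + T n`, where `T` is the sum over
`2 ≤ k ≤ √n`. Its weights `n^{-β} ⌊n/k²⌋^β b_k` are dominated by `c_k = k^{-2β} b_k` and tend
to `c_k`, so by dominated convergence `T` applied to any convergent sequence with limit `L` tends
to `(α - 1) L`. Comparing `s'` with the convergent sequences `min s' m` and `max s' M`, where
`m = liminf s'` and `M = limsup s'`, gives `M + (α - 1) m ≤ 1 ≤ m + (α - 1) M`, and `α < 2`
forces `M = m = 1 / α`.
-/

theorem natCast_div_div_le_inv (n d : ℕ) : ((n / d : ℕ) : ℝ) / n ≤ (d : ℝ)⁻¹ := by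
  calc ((n / d : ℕ) : ℝ) / n ≤ (n : ℝ) / d / n := by gcongr; exact Nat.cast_div_le
    _ ≤ (d : ℝ)⁻¹ := by
      rcases eq_or_ne (n : ℝ) 0 with hn | hn
      · simp [hn]
      · rw [div_right_comm, div_self hn, one_div]

theorem tendsto_natCast_div_div_atTop (d : ℕ) :
    Tendsto (fun n : ℕ => ((n / d : ℕ) : ℝ) / n) atTop (𝓝 (d : ℝ)⁻¹) := by
  have := (tendsto_nat_floor_mul_div_atTop (inv_nonneg.2 (Nat.cast_nonneg (α := ℝ) d))).comp
    tendsto_natCast_atTop_atTop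
  refine this.congr fun n => ?_
  simp [inv_mul_eq_div, Nat.floor_div_eq_div]

theorem inv_sq_rpow_eq_rpow_neg_two_mul (x β : ℝ) (hx : 0 ≤ x) :
    ((x ^ 2)⁻¹) ^ β = x ^ (-(2 * β)) := by
  rw [← Real.rpow_natCast x 2, ← Real.rpow_neg hx, ← Real.rpow_mul hx]
  norm_num

noncomputable def floorWeight (β : ℝ) (n k : ℕ) : ℝ :=
  (n : ℝ) ^ (-β) * ((n / k ^ 2 : ℕ) : ℝ) ^ β

theorem floorWeight_eq (β : ℝ) (n k : ℕ) :
    floorWeight β n k = (((n / k ^ 2 : ℕ) : ℝ) / n) ^ β := by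
  rw [floorWeight, Real.div_rpow (Nat.cast_nonneg _) (Nat.cast_nonneg n),
    Real.rpow_neg (Nat.cast_nonneg n), inv_mul_eq_div]

theorem floorWeight_nonneg (β : ℝ) (n k : ℕ) : 0 ≤ floorWeight β n k := by
  rw [floorWeight_eq]; positivity

theorem floorWeight_le {β : ℝ} (hβ : 0 ≤ β) (n k : ℕ) :
    floorWeight β n k ≤ (k : ℝ) ^ (-(2 * β)) := by
  rw [floorWeight_eq, ← inv_sq_rpow_eq_rpow_neg_two_mul _ _ (Nat.cast_nonneg k)]
  gcongr
  exact_mod_cast natCast_div_div_le_inv n (k ^ 2)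

theorem tendsto_floorWeight {β : ℝ} (hβ : 0 ≤ β) (k : ℕ) :
    Tendsto (fun n => floorWeight β n k) atTop (𝓝 ((k : ℝ) ^ (-(2 * β)))) := by
  simp_rw [floorWeight_eq, ← inv_sq_rpow_eq_rpow_neg_two_mul _ _ (Nat.cast_nonneg k)]
  exact_mod_cast (tendsto_natCast_div_div_atTop (k ^ 2)).rpow_const (Or.inr hβ)

theorem floorWeight_one (β : ℝ) {n : ℕ} (hn : n ≠ 0) : floorWeight β n 1 = 1 := by
  rw [floorWeight_eq, one_pow, Nat.div_one, div_self (Nat.cast_ne_zero.2 hn), Real.one_rpow]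

noncomputable def floorTailSum (β : ℝ) (b z : ℕ → ℝ) (n : ℕ) : ℝ :=
  ∑ k ∈ Finset.Ioc 1 (Nat.sqrt n), floorWeight β n k * b k * z (n / k ^ 2)

section floorTailSum

variable {β : ℝ} {b : ℕ → ℝ}

theorem sum_Icc_eq_add_floorTailSum (hb1 : b 1 = 1) (z : ℕ → ℝ) {n : ℕ} (hn : n ≠ 0) :
    ∑ k ∈ Finset.Icc 1 (Nat.sqrt n), floorWeight β n k * b k * z (n / k ^ 2) =
      z n + floorTailSum β b z n := by
  rw [floorTailSum, Finset.Icc_eq_cons_Ioc (Nat.sqrt_pos.2 (Nat.pos_of_ne_zero hn)),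
    Finset.sum_cons, floorWeight_one β hn, hb1, one_pow, Nat.div_one, one_mul, one_mul]

theorem floorTailSum_mono (hb : ∀ k, 0 ≤ b k) {z z' : ℕ → ℝ} (h : z ≤ z') (n : ℕ) :
    floorTailSum β b z n ≤ floorTailSum β b z' n :=
  Finset.sum_le_sum fun k _ =>
    mul_le_mul_of_nonneg_left (h _) (mul_nonneg (floorWeight_nonneg β n k) (hb k))

theorem floorTailSum_nonneg (hb : ∀ k, 0 ≤ b k) {z : ℕ → ℝ} (hz : 0 ≤ z) (n : ℕ) :
    0 ≤ floorTailSum β b z n := by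
  simpa [floorTailSum] using floorTailSum_mono (β := β) hb hz n

noncomputable def tailCoeff (β : ℝ) (b : ℕ → ℝ) (k : ℕ) : ℝ :=
  if 1 < k then (k : ℝ) ^ (-(2 * β)) * b k else 0

theorem tailCoeff_nonneg (hb : ∀ k, 0 ≤ b k) (k : ℕ) : 0 ≤ tailCoeff β b k := by
  unfold tailCoeff
  split_ifs
  exacts [mul_nonneg (by positivity) (hb k), le_rfl]

theorem hasSum_tailCoeff {α : ℝ}
    (hα : HasSum (fun k : ℕ => b (k + 1) * (((k : ℝ) + 1) ^ (-(2 * β)))) α) :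
    HasSum (tailCoeff β b) (α - b 1) := by
  have h := (hasSum_nat_add_iff' 1).2 hα
  simp only [Finset.sum_range_one, Nat.cast_zero, zero_add, Real.one_rpow, mul_one] at h
  have h01 : ∑ i ∈ Finset.range 2, tailCoeff β b i = 0 := by
    simp [tailCoeff, Finset.sum_range_succ]
  refine (hasSum_nat_add_iff' 2).1 ?_
  rw [h01, sub_zero]
  refine h.congr_fun fun j => ?_
  rw [tailCoeff, if_pos (by omega)]
  push_cast
  ring_nf

noncomputable def floorTailTerm (β : ℝ) (b z : ℕ → ℝ) (n k : ℕ) : ℝ :=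
  if k ∈ Finset.Ioc 1 (Nat.sqrt n) then floorWeight β n k * b k * z (n / k ^ 2) else 0

theorem tsum_floorTailTerm (z : ℕ → ℝ) (n : ℕ) :
    ∑' k, floorTailTerm β b z n k = floorTailSum β b z n := by
  unfold floorTailTerm
  rw [tsum_eq_sum (s := Finset.Ioc 1 (Nat.sqrt n)) fun k hk => if_neg hk]
  exact Finset.sum_congr rfl fun k hk => if_pos hk

theorem tendsto_floorTailTerm (hβ : 0 ≤ β) {z : ℕ → ℝ} {L : ℝ} (hz : Tendsto z atTop (𝓝 L))
    (k : ℕ) : Tendsto (floorTailTerm β b z · k) atTop (𝓝 (tailCoeff β b k * L)) := by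
  unfold floorTailTerm tailCoeff
  split_ifs with hk
  · have hmem : ∀ᶠ n in atTop, k ∈ Finset.Ioc 1 (Nat.sqrt n) := by
      filter_upwards [eventually_ge_atTop (k * k)] with n hn
      exact Finset.mem_Ioc.2 ⟨hk, Nat.le_sqrt.2 hn⟩
    refine Tendsto.congr' (hmem.mono fun n hn => (if_pos hn).symm) ?_
    exact ((tendsto_floorWeight hβ k).mul_const (b k)).mul
      (hz.comp (Nat.tendsto_div_const_atTop (by positivity)))
  · refine tendsto_const_nhds.congr fun n => ?_
    rw [zero_mul, if_neg]
    simp only [Finset.mem_Ioc]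
    omega

theorem norm_floorTailTerm_le (hβ : 0 ≤ β) (hb : ∀ k, 0 ≤ b k) {z : ℕ → ℝ} {C : ℝ}
    (hC : ∀ i, ‖z i‖ ≤ C) (n k : ℕ) :
    ‖floorTailTerm β b z n k‖ ≤ tailCoeff β b k * C := by
  unfold floorTailTerm
  by_cases hk : k ∈ Finset.Ioc 1 (Nat.sqrt n)
  · rw [if_pos hk, tailCoeff, if_pos (Finset.mem_Ioc.1 hk).1, norm_mul, norm_mul,
      Real.norm_of_nonneg (floorWeight_nonneg β n k), Real.norm_of_nonneg (hb k)]
    exact mul_le_mul (mul_le_mul_of_nonneg_right (floorWeight_le hβ n k) (hb k)) (hC _)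
      (norm_nonneg _) (mul_nonneg (by positivity) (hb k))
  · rw [if_neg hk, norm_zero]
    exact mul_nonneg (tailCoeff_nonneg hb k) ((norm_nonneg _).trans (hC 0))

theorem tendsto_floorTailSum (hβ : 0 ≤ β) (hb : ∀ k, 0 ≤ b k) {α : ℝ}
    (hα : HasSum (fun k : ℕ => b (k + 1) * (((k : ℝ) + 1) ^ (-(2 * β)))) α)
    {z : ℕ → ℝ} {L : ℝ} (hz : Tendsto z atTop (𝓝 L)) :
    Tendsto (floorTailSum β b z) atTop (𝓝 ((α - b 1) * L)) := by
  obtain ⟨C, hC⟩ := hz.norm.bddAbove_range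
  have h := tendsto_tsum_of_dominated_convergence ((hasSum_tailCoeff hα).summable.mul_right C)
    (tendsto_floorTailTerm hβ hz)
    (Eventually.of_forall (norm_floorTailTerm_le hβ hb fun i => hC ⟨i, rfl⟩))
  simpa only [tsum_floorTailTerm, ((hasSum_tailCoeff hα).mul_right L).tsum_eq] using h

end floorTailSum

section LimsupEnvelope

variable {ι R : Type*} [ConditionallyCompleteLinearOrder R] [TopologicalSpace R] [OrderTopology R]
  {l : Filter ι} {u : ι → R}

theorem tendsto_max_limsup (hu : IsBoundedUnder (· ≤ ·) l u) :
    Tendsto (fun i => max (u i) (limsup u l)) l (𝓝 (limsup u l)) :=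
  tendsto_order.2 ⟨fun _ ha => Eventually.of_forall fun _ => ha.trans_le (le_max_right _ _),
    fun _ ha => (eventually_lt_of_limsup_lt ha hu).mono fun _ hi => max_lt hi ha⟩

theorem tendsto_min_liminf (hu : IsBoundedUnder (· ≥ ·) l u) :
    Tendsto (fun i => min (u i) (liminf u l)) l (𝓝 (liminf u l)) :=
  tendsto_order.2 ⟨fun _ ha => (eventually_lt_of_lt_liminf ha hu).mono fun _ hi => lt_min hi ha,
    fun _ ha => Eventually.of_forall fun _ => (min_le_right _ _).trans_lt ha⟩

end LimsupEnvelope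

theorem eq_one_div_of_add_mul_le_one_le_add_mul {α M m : ℝ} (hα : α < 2) (hmM : m ≤ M)
    (hM : M + (α - 1) * m ≤ 1) (hm : 1 ≤ m + (α - 1) * M) : m = 1 / α ∧ M = 1 / α := by
  -- the two bounds give `(2 - α) (M - m) ≤ 0`
  have hMm : M = m := by nlinarith
  subst hMm
  have hαM : α * M = 1 := by linarith
  exact ⟨eq_one_div_of_mul_eq_one_right hαM, eq_one_div_of_mul_eq_one_right hαM⟩

/-- A real-sequence lemma: if `α = ∑_{k ≥ 1} b_k k^{-2β} < 2` with `b_1 = 1`,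
`b_k ≥ 0`, and the sequences `s'_n ≥ 0` and
`s_n = ∑_{k=1}^{⌊√n⌋} n^{-β} ⌊n/k²⌋^β b_k s'_{⌊n/k²⌋}` satisfy `s_n → 1`,
then `s'_n → 1/α`. -/
theorem tendsto_of_weighted_floor_sum_tendsto
    (β : ℝ) (hβ : 0 < β)
    (b : ℕ → ℝ) (hb : ∀ k, 0 ≤ b k) (hb1 : b 1 = 1)
    (α : ℝ)
    (hα : HasSum (fun k : ℕ => b (k + 1) * (((k : ℝ) + 1) ^ (-(2 * β)))) α)
    (hα2 : α < 2)
    (s' : ℕ → ℝ) (hs' : ∀ n, 0 ≤ s' n)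
    (s : ℕ → ℝ)
    (hs : ∀ n : ℕ, s n = ∑ k ∈ Finset.Icc 1 (Nat.sqrt n),
        (n : ℝ) ^ (-β) * ((n / k ^ 2 : ℕ) : ℝ) ^ β * b k * s' (n / k ^ 2))
    (hlim : Tendsto s atTop (𝓝 1)) :
    Tendsto s' atTop (𝓝 (1 / α)) := by
  have hs_split : ∀ n ≠ 0, s n = s' n + floorTailSum β b s' n := fun n hn =>
    (hs n).trans (sum_Icc_eq_add_floorTailSum hb1 s' hn)
  have h_above : IsBoundedUnder (· ≤ ·) atTop s' := by
    refine hlim.isBoundedUnder_le.mono_le ((eventually_ne_atTop 0).mono fun n hn => ?_)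
    linarith [hs_split n hn, floorTailSum_nonneg (β := β) hb hs' n]
  have h_below : IsBoundedUnder (· ≥ ·) atTop s' :=
    isBoundedUnder_of_eventually_ge (Eventually.of_forall hs')
  set M := limsup s' atTop
  set m := liminf s' atTop
  have hT_lim {z : ℕ → ℝ} {L : ℝ} (hz : Tendsto z atTop (𝓝 L)) :
      Tendsto (fun n => s n - floorTailSum β b z n) atTop (𝓝 (1 - (α - 1) * L)) := by
    simpa only [hb1] using hlim.sub (tendsto_floorTailSum hβ.le hb hα hz)
  have h_limsup : M + (α - 1) * m ≤ 1 := by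
    have h := hT_lim (tendsto_min_liminf h_below)
    refine le_sub_iff_add_le.1 ((limsup_le_limsup ((eventually_ne_atTop 0).mono fun n hn => ?_)
      h_below.isCoboundedUnder_le h.isBoundedUnder_le).trans_eq h.limsup_eq)
    linarith [hs_split n hn, floorTailSum_mono (β := β) hb (fun i => min_le_left (s' i) m) n]
  have h_liminf : 1 ≤ m + (α - 1) * M := by
    have h := hT_lim (tendsto_max_limsup h_above)
    refine sub_le_iff_le_add.1 (h.liminf_eq.symm.trans_le (liminf_le_liminf
      ((eventually_ne_atTop 0).mono fun n hn => ?_) h.isBoundedUnder_ge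
      h_above.isCoboundedUnder_ge))
    linarith [hs_split n hn, floorTailSum_mono (β := β) hb (fun i => le_max_left (s' i) M) n]
  obtain ⟨hm, hM⟩ := eq_one_div_of_add_mul_le_one_le_add_mul hα2
    (liminf_le_limsup h_above h_below) h_limsup h_liminf
  exact tendsto_of_liminf_eq_limsup hm hM h_above h_below
end

section
/- Fix integers d \ge 1 and r \ge 1 and a nondegenerate symmetric bilinear form B on \mathbb{R}^d whose positive index (the dimension of a maximal subspace of \mathbb{R}^d on which B is positive definite) is at least r. Then the group O(B) \times \mathrm{SL}_r(\mathbb{R}) acts transitively on \Omega_1: for any v, w \in \Omega_1 there exist a linear map g : \mathbb{R}^d \to \mathbb{R}^d with B(gx,gy) = B(x,y) for all x,y, and a real r \times r matrix A = (A_{ij}) of determinant 1, such that w_i = \sum_{j=1}^r A_{ji}\, g(v_j) for all 1 \le i \le r. -/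
section WittHelpers

variable {M : Type*} [AddCommGroup M] [Module ℝ M]

/-- Reflection in an anisotropic vector preserves the form. -/
private lemma refl_exists (B : M →ₗ[ℝ] M →ₗ[ℝ] ℝ) (hs : ∀ x y, B x y = B y x)
    (z : M) (hz : B z z ≠ 0) :
    ∃ τ : M →ₗ[ℝ] M, (∀ x y, B (τ x) (τ y) = B x y) ∧
      ∀ x, τ x = x - (2 * (B z z)⁻¹ * B z x) • z := by
  refine ⟨LinearMap.id - (2 * (B z z)⁻¹) • ((B z).smulRight z), ?_, fun x => ?_⟩
  · intro x y
    simp only [LinearMap.sub_apply, LinearMap.smul_apply, LinearMap.id_apply,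
      LinearMap.smulRight_apply, map_sub, map_smul, smul_eq_mul, mul_smul]
    rw [hs x z]
    field_simp
    ring
  · simp only [LinearMap.sub_apply, LinearMap.smul_apply, LinearMap.id_apply,
      LinearMap.smulRight_apply, smul_eq_mul, mul_smul]

/-- Mapping one positive vector to another with the same length. -/
private lemma map_single (B : M →ₗ[ℝ] M →ₗ[ℝ] ℝ) (hs : ∀ x y, B x y = B y x)
    (a b : M) (hab : B a a = B b b) (ha : 0 < B a a) :
    ∃ g : M →ₗ[ℝ] M, (∀ x y, B (g x) (g y) = B x y) ∧ g a = b := by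
  have hba : B b a = B a b := hs b a
  by_cases hd : B (a - b) (a - b) ≠ 0
  · obtain ⟨τ, hτ, hτx⟩ := refl_exists B hs _ hd
    refine ⟨τ, hτ, ?_⟩
    have h1 : B (a - b) a = B a a - B a b := by
      simp [map_sub, hba]
    have h2 : B (a - b) (a - b) = 2 * (B a a - B a b) := by
      simp [map_sub, hba]
      rw [← hab]; ring
    have hne : B a a - B a b ≠ 0 := by
      intro h; exact hd (by rw [h2, h, mul_zero])
    rw [hτx, h1, h2]
    rw [show 2 * (2 * (B a a - B a b))⁻¹ * (B a a - B a b) = 1 by field_simp]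
    simp
  · push_neg at hd
    have hkey : B (a - b) (a - b) + B (a + b) (a + b) = 4 * B a a := by
      simp [map_sub, map_add, hba]
      rw [← hab]; ring
    have hsum : B (a + b) (a + b) ≠ 0 := by
      intro h; rw [hd, h] at hkey; nlinarith
    obtain ⟨τ₁, hτ₁, hτ₁x⟩ := refl_exists B hs _ hsum
    have hbb : B b b ≠ 0 := by rw [← hab]; exact ha.ne'
    obtain ⟨τ₂, hτ₂, hτ₂x⟩ := refl_exists B hs b hbb
    refine ⟨τ₂ ∘ₗ τ₁, fun x y => by simp [LinearMap.comp_apply, hτ₂, hτ₁], ?_⟩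
    have h1 : B (a + b) a = B a a + B a b := by simp [map_add, hba]
    have h2 : B (a + b) (a + b) = 2 * (B a a + B a b) := by
      simp [map_add, hba]
      rw [← hab]; ring
    have hne : B a a + B a b ≠ 0 := by
      intro h; exact hsum (by rw [h2, h, mul_zero])
    have ha1 : τ₁ a = -b := by
      rw [hτ₁x, h1, h2]
      rw [show 2 * (2 * (B a a + B a b))⁻¹ * (B a a + B a b) = 1 by field_simp]
      rw [one_smul]; abel
    have ha2 : τ₂ (-b) = b := by
      rw [hτ₂x]
      rw [map_neg, show 2 * (B b b)⁻¹ * -(B b b) = -2 by field_simp]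
      module
    rw [LinearMap.comp_apply, ha1, ha2]

/-- Witt-type extension theorem for tuples spanning a positive definite
subspace: an isometry between them extends to an endomorphism preserving `B`. -/
private lemma witt_pos : ∀ (n : ℕ) (M : Type) [AddCommGroup M] [Module ℝ M]
    (B : M →ₗ[ℝ] M →ₗ[ℝ] ℝ), (∀ x y, B x y = B y x) →
    ∀ u w : Fin n → M,
    (∀ c : Fin n → ℝ, c ≠ 0 → 0 < B (∑ i, c i • u i) (∑ i, c i • u i)) →
    (∀ i j, B (u i) (u j) = B (w i) (w j)) →
    ∃ g : M →ₗ[ℝ] M, (∀ x y, B (g x) (g y) = B x y) ∧ ∀ i, g (u i) = w i := by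
  intro n
  induction n with
  | zero =>
    intro M _ _ B hs u w _ _
    exact ⟨LinearMap.id, fun x y => rfl, fun i => i.elim0⟩
  | succ n IH =>
    intro M _ _ B hs u w hpos hgram
    have h0 : 0 < B (u 0) (u 0) := by
      have h := hpos (Pi.single 0 1) (by
        intro h; have := congrFun h 0; simp at this)
      simpa [Pi.single_apply, ite_smul] using h
    obtain ⟨g₁, hg₁B, hg₁a⟩ := map_single B hs (u 0) (w 0) (hgram 0 0) h0
    set u' : Fin (n + 1) → M := fun i => g₁ (u i) with hu'
    have hu'0 : u' 0 = w 0 := hg₁a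
    have hgram' : ∀ i j, B (u' i) (u' j) = B (w i) (w j) :=
      fun i j => (hg₁B _ _).trans (hgram i j)
    set Q := B (w 0) (w 0) with hQ
    have hQpos : 0 < Q := by rw [hQ, ← hgram 0 0]; exact h0
    set N := LinearMap.ker (B (w 0)) with hN
    set c : M →ₗ[ℝ] ℝ := Q⁻¹ • (B (w 0)) with hc
    have hcx : ∀ x, c x = Q⁻¹ * B (w 0) x := fun x => rfl
    have hπmem : ∀ x : M, x - c x • w 0 ∈ N := by
      intro x
      rw [hN, LinearMap.mem_ker, map_sub, map_smul, hcx, smul_eq_mul, ← hQ]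
      field_simp
      ring
    set π : M →ₗ[ℝ] N :=
      LinearMap.codRestrict N (LinearMap.id - c.smulRight (w 0)) (fun x => hπmem x) with hπ
    have hπcoe : ∀ x : M, ((π x : N) : M) = x - c x • w 0 := fun x => rfl
    have hmem0 : ∀ y : N, B (w 0) (y : M) = 0 := fun y => y.2
    set B' : N →ₗ[ℝ] N →ₗ[ℝ] ℝ := B.compl₁₂ N.subtype N.subtype with hB'def
    have hB' : ∀ x y : N, B' x y = B (x : M) (y : M) := fun x y => rfl
    have hs' : ∀ x y : N, B' x y = B' y x := fun x y => hs _ _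
    have hπB : ∀ x y : M, B ((π x : N) : M) ((π y : N) : M)
        = B x y - Q⁻¹ * (B (w 0) x * B (w 0) y) := by
      intro x y
      rw [hπcoe, hπcoe]
      simp only [map_sub, map_smul, LinearMap.sub_apply, LinearMap.smul_apply,
        smul_eq_mul, hcx]
      rw [hs x (w 0), ← hQ]
      field_simp
      ring
    set ub : Fin n → N := fun i => π (u' i.succ) with hub
    set wb : Fin n → N := fun i => π (w i.succ) with hwb
    have hw0u' : ∀ i : Fin (n + 1), B (w 0) (u' i) = B (w 0) (w i) := by
      intro i
      calc B (w 0) (u' i) = B (u' 0) (u' i) := by rw [hu'0]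
        _ = B (w 0) (w i) := hgram' 0 i
    have hgb : ∀ i j, B' (ub i) (ub j) = B' (wb i) (wb j) := by
      intro i j
      rw [hB', hB', hub, hwb, hπB, hπB, hgram' i.succ j.succ, hw0u', hw0u']
    have hposb : ∀ cv : Fin n → ℝ, cv ≠ 0 →
        0 < B' (∑ i, cv i • ub i) (∑ i, cv i • ub i) := by
      intro cv hcv
      set d : Fin (n + 1) → ℝ := Fin.cons (-∑ i, cv i * c (u' i.succ)) cv with hd
      have hdne : d ≠ 0 := by
        intro h
        apply hcv
        funext i
        have := congrFun h i.succ
        simpa [hd, Fin.cons_succ] using this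
      have hcoesum : ((∑ i, cv i • ub i : N) : M) = ∑ k, d k • u' k := by
        rw [Fin.sum_univ_succ]
        push_cast
        simp only [hub, hπcoe, smul_sub, smul_smul]
        rw [Finset.sum_sub_distrib, ← Finset.sum_smul]
        simp [hd, Fin.cons_zero, Fin.cons_succ, neg_smul, sub_eq_add_neg, add_comm]
        rw [hu'0]
      have hsum2 : (∑ k, d k • u' k) = g₁ (∑ k, d k • u k) := by
        rw [map_sum]; simp [hu', map_smul]
      rw [hB', hcoesum, hsum2, hg₁B]
      exact hpos d hdne
    obtain ⟨h, hhB, hhu⟩ := IH N B' hs' ub wb hposb hgb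
    set G : M →ₗ[ℝ] M := c.smulRight (w 0) + N.subtype ∘ₗ h ∘ₗ π with hG
    have hGx : ∀ x : M, G x = c x • w 0 + ((h (π x) : N) : M) := fun x => rfl
    have hGB : ∀ x y, B (G x) (G y) = B x y := by
      intro x y
      rw [hGx, hGx]
      have h3 : B ((h (π x) : N) : M) ((h (π y) : N) : M)
          = B ((π x : N) : M) ((π y : N) : M) := hhB (π x) (π y)
      simp only [map_add, map_smul, LinearMap.add_apply, LinearMap.smul_apply,
        smul_eq_mul]
      rw [h3, hπB, hmem0 (h (π y)), hs ((h (π x) : N) : M) (w 0), hmem0 (h (π x)),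
        hcx, hcx, ← hQ]
      field_simp
      ring
    refine ⟨G ∘ₗ g₁, fun x y => by rw [LinearMap.comp_apply, LinearMap.comp_apply, hGB, hg₁B],
      ?_⟩
    intro i
    induction i using Fin.cases with
    | zero =>
      rw [LinearMap.comp_apply, hg₁a, hGx]
      have hπw0 : π (w 0) = 0 := by
        apply Subtype.ext
        rw [hπcoe, hcx, ← hQ]
        field_simp
        simp
      rw [hπw0, map_zero]
      rw [hcx, ← hQ]
      field_simp
      simp
    | succ j =>
      rw [LinearMap.comp_apply]
      show G (u' j.succ) = w j.succ
      rw [hGx, hhu j, hwb]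
      rw [hπcoe, hcx, hcx, hw0u' j.succ]
      abel

private lemma gram_expand {M : Type*} [AddCommGroup M] [Module ℝ M]
    (B : M →ₗ[ℝ] M →ₗ[ℝ] ℝ) {n : ℕ} (u : Fin n → M) (a b : Fin n → ℝ) :
    B (∑ i, a i • u i) (∑ j, b j • u j) = ∑ i, ∑ j, a i * b j * B (u i) (u j) := by
  simp only [map_sum, map_smul, LinearMap.sum_apply, LinearMap.smul_apply, smul_eq_mul,
    Finset.mul_sum]
  rw [Finset.sum_comm]
  refine Finset.sum_congr rfl fun i _ => Finset.sum_congr rfl fun j _ => by ring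

end WittHelpers

open scoped MatrixOrder

/-- If the nondegenerate symmetric bilinear form `B` on `ℝ^d` has positive index
at least `r` (there is an `r`-dimensional subspace on which `B` is positive
definite), then `O(B) × SL_r(ℝ)` acts transitively on the set `Ω₁` of `r`-tuples
whose Gram matrix is positive definite with determinant `1`. -/
theorem transitive_on_unit_gram_tuples
    (d r : ℕ) (hd : 1 ≤ d) (hr : 1 ≤ r)
    (B : (Fin d → ℝ) →ₗ[ℝ] (Fin d → ℝ) →ₗ[ℝ] ℝ)
    (hBsymm : ∀ x y, B x y = B y x)
    (hBnondeg : ∀ x, (∀ y, B x y = 0) → x = 0)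
    (hBidx : ∃ W : Submodule ℝ (Fin d → ℝ), Module.finrank ℝ W = r ∧
      ∀ x ∈ W, x ≠ 0 → 0 < B x x)
    (v w : Fin r → Fin d → ℝ)
    (hv : (Matrix.of fun i j => B (v i) (v j)).PosDef ∧
      (Matrix.of fun i j => B (v i) (v j)).det = 1)
    (hw : (Matrix.of fun i j => B (w i) (w j)).PosDef ∧
      (Matrix.of fun i j => B (w i) (w j)).det = 1) :
    ∃ (g : (Fin d → ℝ) →ₗ[ℝ] (Fin d → ℝ)) (A : Matrix (Fin r) (Fin r) ℝ),
      (∀ x y, B (g x) (g y) = B x y) ∧ A.det = 1 ∧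
      ∀ i, w i = ∑ j, A j i • g (v j) := by
  classical
  set Gv : Matrix (Fin r) (Fin r) ℝ := Matrix.of fun i j => B (v i) (v j) with hGv
  set Gw : Matrix (Fin r) (Fin r) ℝ := Matrix.of fun i j => B (w i) (w j) with hGw
  -- square roots
  set S : Matrix (Fin r) (Fin r) ℝ := CFC.sqrt Gv with hS
  set T : Matrix (Fin r) (Fin r) ℝ := CFC.sqrt Gw with hT
  have hSS : S * S = Gv := CFC.sqrt_mul_sqrt_self Gv hv.1.posSemidef.nonneg
  have hTT : T * T = Gw := CFC.sqrt_mul_sqrt_self Gw hw.1.posSemidef.nonneg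
  have hdetS1 : S.det = 1 := by
    have hsq : S.det * S.det = 1 := by
      rw [← Matrix.det_mul, hSS, hv.2]
    have hnn : 0 ≤ S.det := by
      rw [(Matrix.nonneg_iff_posSemidef.mp (CFC.sqrt_nonneg Gv)).1.det_eq_prod_eigenvalues]
      exact Finset.prod_nonneg fun i _ =>
        (Matrix.nonneg_iff_posSemidef.mp (CFC.sqrt_nonneg Gv)).eigenvalues_nonneg i
    nlinarith
  have hdetT1 : T.det = 1 := by
    have hsq : T.det * T.det = 1 := by
      rw [← Matrix.det_mul, hTT, hw.2]
    have hnn : 0 ≤ T.det := by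
      rw [(Matrix.nonneg_iff_posSemidef.mp (CFC.sqrt_nonneg Gw)).1.det_eq_prod_eigenvalues]
      exact Finset.prod_nonneg fun i _ =>
        (Matrix.nonneg_iff_posSemidef.mp (CFC.sqrt_nonneg Gw)).eigenvalues_nonneg i
    nlinarith
  have hSt : S.transpose = S := by
    rw [← Matrix.conjTranspose_eq_transpose_of_trivial]
    exact (Matrix.nonneg_iff_posSemidef.mp (CFC.sqrt_nonneg Gv)).1
  have hTt : T.transpose = T := by
    rw [← Matrix.conjTranspose_eq_transpose_of_trivial]
    exact (Matrix.nonneg_iff_posSemidef.mp (CFC.sqrt_nonneg Gw)).1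
  set A : Matrix (Fin r) (Fin r) ℝ := S⁻¹ * T with hA
  have hdetA : A.det = 1 := by
    rw [hA, Matrix.det_mul, Matrix.det_nonsing_inv, hdetS1, hdetT1, Ring.inverse_one ℝ,
      one_mul]
  have hSinv : S⁻¹ * S = 1 := Matrix.nonsing_inv_mul S (by rw [hdetS1]; exact isUnit_one)
  have hSinv' : S * S⁻¹ = 1 := Matrix.mul_nonsing_inv S (by rw [hdetS1]; exact isUnit_one)
  have hAt : A.transpose = T * S⁻¹ := by
    rw [hA, Matrix.transpose_mul, hTt, Matrix.transpose_nonsing_inv, hSt]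
  have hcong : A.transpose * Gv * A = Gw := by
    rw [hAt, hA, ← hSS, ← hTT]
    calc T * S⁻¹ * (S * S) * (S⁻¹ * T)
        = T * ((S⁻¹ * S) * (S * S⁻¹)) * T := by
          simp only [Matrix.mul_assoc]
      _ = T * T := by rw [hSinv, hSinv', Matrix.mul_one, Matrix.mul_one]
  -- the transformed tuple
  set u : Fin r → Fin d → ℝ := fun i => ∑ j, A j i • v j with hu
  have hmul : ∀ i k, (A.transpose * Gv * A) i k = ∑ l, ∑ j, A j i * Gv j l * A l k := by
    intro i k
    rw [Matrix.mul_apply]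
    refine Finset.sum_congr rfl fun l _ => ?_
    rw [Matrix.mul_apply, Finset.sum_mul]
    refine Finset.sum_congr rfl fun j _ => ?_
    rw [Matrix.transpose_apply]
  have hGramU : ∀ i k, B (u i) (u k) = Gw i k := by
    intro i k
    show B (∑ j, A j i • v j) (∑ l, A l k • v l) = Gw i k
    rw [gram_expand B v (fun j => A j i) (fun l => A l k), ← hcong, hmul,
      Finset.sum_comm]
    refine Finset.sum_congr rfl fun j _ => Finset.sum_congr rfl fun l _ => ?_
    rw [hGv, Matrix.of_apply]
    ring
  have hposU : ∀ cv : Fin r → ℝ, cv ≠ 0 → 0 < B (∑ i, cv i • u i) (∑ i, cv i • u i) := by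
    intro cv hcv
    have hp := hw.1.dotProduct_mulVec_pos hcv
    have heq : dotProduct (star cv) (Gw.mulVec cv)
        = ∑ i, ∑ j, cv i * cv j * B (u i) (u j) := by
      simp only [dotProduct, Matrix.mulVec, Pi.star_apply, star_trivial,
        Finset.mul_sum]
      refine Finset.sum_congr rfl fun i _ => Finset.sum_congr rfl fun j _ => ?_
      rw [hGramU i j]
      show cv i * (Gw i j * cv j) = cv i * cv j * Gw i j
      ring
    rw [gram_expand, ← heq]
    exact hp
  have hgramUW : ∀ i j, B (u i) (u j) = B (w i) (w j) := fun i j => by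
    rw [hGramU]; rfl
  obtain ⟨g, hgB, hgu⟩ := witt_pos r (Fin d → ℝ) B hBsymm u w hposU hgramUW
  refine ⟨g, A, hgB, hdetA, fun i => ?_⟩
  rw [← hgu i, hu, map_sum]
  simp [map_smul]
end
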